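/- Let q be a smooth real-valued 1-periodic function with Fourier coefficients q̂(ξ) = ∫₀¹ e^{−iξx} q(x) dx for ξ ∈ 2πℤ, and for κ > 0 set Q_κ(q) := (2e^{−κ}/(1−e^{−κ})²) · |q̂(0)|²/(4κ²) + ((1−e^{−2κ})/(κ(1−e^{−κ})²)) Σ_{ξ∈2πℤ} |q̂(ξ)|²/(ξ²+4κ²). Then for every κ ≥ 1: (1/κ) Σ_{ξ∈2πℤ} |q̂(ξ)|²/(ξ²+4κ²) ≤ Q_κ(q) ≤ (5/κ) Σ_{ξ∈2πℤ} |q̂(ξ)|²/(ξ²+4κ²), and consequently (1/(4κ³)) ‖q‖²_{H^{-1}} ≤ Q_κ(q) ≤ (5/κ) ‖q‖²_{H^{-1}}. -/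

import Mathlib

open MeasureTheory Complex Real

/-! Write `t = e^{-κ}`. Then `Q_κ(q) = A ‖q̂(0)‖²/(4κ²) + B S` with `A = 2t/(1-t)²`,
`B = (1+t)/(κ(1-t))` and `S = Σ |q̂(ξ)|²/(ξ²+4κ²)`. Since `‖q̂(0)‖²/(4κ²)` is the `ξ = 0` term of `S`,
`Q_κ(q)` lies between `B S` and `(A + B) S`, and `1/κ ≤ B`, `A + B ≤ 5/κ` follow from `t < 1` and
`κ e^{-κ} ≤ e^{-1}`. The `H^{-1}` bounds come from comparing the weights termwise:
`(ξ²+4κ²)⁻¹ ≤ (1+ξ²)⁻¹ ≤ 4κ² (ξ²+4κ²)⁻¹`. -/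

/-- Fourier coefficients on the circle: `q̂(ξ) = ∫₀¹ e^{-iξx} q(x) dx` for `ξ ∈ 2πℤ`. -/
noncomputable def FC (f : ℝ → ℝ) (ξ : ℝ) : ℂ :=
  ∫ x in (0:ℝ)..1, Complex.exp (-(Complex.I * ξ * x)) * f x

/-- The squared Hilbert--Schmidt norm of `√R₀ q √R₀` on `L²(ℝ/ℤ)`. -/
noncomputable def Qκ (κ : ℝ) (q : ℝ → ℝ) : ℝ :=
  (2 * Real.exp (-κ) / (1 - Real.exp (-κ)) ^ 2) *
      (‖FC q 0‖ ^ 2 / (4 * κ ^ 2)) +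
    ((1 - Real.exp (-2 * κ)) / (κ * (1 - Real.exp (-κ)) ^ 2)) *
      ∑' n : ℤ, ‖FC q (2 * Real.pi * n)‖ ^ 2 /
        ((2 * Real.pi * n) ^ 2 + 4 * κ ^ 2)

lemma norm_FC_le_integral_abs (q : ℝ → ℝ) (ξ : ℝ) :
    ‖FC q ξ‖ ≤ ∫ x in (0:ℝ)..1, |q x| := by
  refine (intervalIntegral.norm_integral_le_integral_norm zero_le_one).trans_eq ?_
  refine intervalIntegral.integral_congr fun x _ => ?_
  simp [Complex.norm_exp]

lemma summable_div_two_pi_int_sq_add {c : ℤ → ℝ} {M : ℝ} (hc : ∀ n, 0 ≤ c n)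
    (hcM : ∀ n, c n ≤ M) {d : ℝ} (hd : 0 ≤ d) :
    Summable fun n : ℤ => c n / ((2 * π * n) ^ 2 + d) := by
  have hM : 0 ≤ M := (hc 0).trans (hcM 0)
  refine Summable.of_norm_bounded_eventually
    ((summable_one_div_int_pow.mpr one_lt_two).mul_left M) ?_
  filter_upwards [Filter.eventually_cofinite_ne 0] with n hn
  have hn2 : (0 : ℝ) < (n : ℝ) ^ 2 := by positivity
  have hpi : 1 ≤ (2 * π) ^ 2 := by nlinarith [pi_gt_three]
  have hden : (n : ℝ) ^ 2 ≤ (2 * π * n) ^ 2 + d := by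
    rw [mul_pow]; nlinarith
  rw [Real.norm_of_nonneg (div_nonneg (hc n) (by positivity)), mul_one_div]
  exact div_le_div₀ hM (hcM n) hn2 hden

lemma summable_norm_FC_sq_div (q : ℝ → ℝ) {d : ℝ} (hd : 0 ≤ d) :
    Summable fun n : ℤ => ‖FC q (2 * π * n)‖ ^ 2 / ((2 * π * n) ^ 2 + d) :=
  summable_div_two_pi_int_sq_add (fun _ => by positivity)
    (fun n => pow_le_pow_left₀ (norm_nonneg _) (norm_FC_le_integral_abs q _) 2) hd

lemma one_div_le_Qκ_coeff {κ : ℝ} (hκ : 0 < κ) :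
    1 / κ ≤ (1 - Real.exp (-2 * κ)) / (κ * (1 - Real.exp (-κ)) ^ 2) := by
  have ht0 := Real.exp_pos (-κ)
  have ht1 : Real.exp (-κ) < 1 := exp_lt_one_iff.mpr (neg_lt_zero.mpr hκ)
  have h1t : 0 < 1 - Real.exp (-κ) := sub_pos.mpr ht1
  have hsq : Real.exp (-2 * κ) = Real.exp (-κ) ^ 2 := by rw [← Real.exp_nat_mul]; ring_nf
  rw [hsq, div_le_div_iff₀ hκ (by positivity)]
  nlinarith [mul_pos hκ (mul_pos ht0 h1t)]

lemma Qκ_coeffs_add_le {κ : ℝ} (hκ : 1 ≤ κ) :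
    2 * Real.exp (-κ) / (1 - Real.exp (-κ)) ^ 2 +
        (1 - Real.exp (-2 * κ)) / (κ * (1 - Real.exp (-κ)) ^ 2) ≤ 5 / κ := by
  have hκ0 : 0 < κ := zero_lt_one.trans_le hκ
  set t := Real.exp (-κ) with ht
  have ht0 : 0 < t := Real.exp_pos _
  have htκ : t * κ < 0.3678794412 := by
    rw [mul_comm]; exact (mul_exp_neg_le_exp_neg_one κ).trans_lt exp_neg_one_lt_d9
  have ht1 : t < 0.3678794412 := by nlinarith
  have hsq : Real.exp (-2 * κ) = t ^ 2 := by rw [ht, ← Real.exp_nat_mul]; ring_nf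
  have h1t : 0 < 1 - t := by linarith
  have hsum : 2 * t / (1 - t) ^ 2 + (1 - t ^ 2) / (κ * (1 - t) ^ 2)
      = (2 * t * κ + (1 - t ^ 2)) / (κ * (1 - t) ^ 2) := by
    field_simp
  have key : 2 * t * κ + (1 - t ^ 2) ≤ 5 * (1 - t) ^ 2 := by nlinarith
  rw [hsq, hsum, div_le_div_iff₀ (by positivity) hκ0]
  nlinarith [mul_le_mul_of_nonneg_right key hκ0.le]

lemma le_add_mul_le_of_coeffs {A B lo hi a S : ℝ} (hA : 0 ≤ A) (hB : lo ≤ B) (hAB : A + B ≤ hi)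
    (ha : 0 ≤ a) (haS : a ≤ S) : lo * S ≤ A * a + B * S ∧ A * a + B * S ≤ hi * S := by
  have hS : 0 ≤ S := ha.trans haS
  constructor <;> nlinarith [mul_le_mul_of_nonneg_left haS hA]

lemma Qκ_bounds (q : ℝ → ℝ) {κ : ℝ} (hκ : 1 ≤ κ) :
    (1 / κ) * (∑' n : ℤ, ‖FC q (2 * π * n)‖ ^ 2 / ((2 * π * n) ^ 2 + 4 * κ ^ 2)) ≤ Qκ κ q ∧
      Qκ κ q ≤ (5 / κ) * ∑' n : ℤ, ‖FC q (2 * π * n)‖ ^ 2 / ((2 * π * n) ^ 2 + 4 * κ ^ 2) := by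
  have hκ0 : 0 < κ := zero_lt_one.trans_le hκ
  have hs := summable_norm_FC_sq_div q (d := 4 * κ ^ 2) (by positivity)
  have hzero : ‖FC q 0‖ ^ 2 / (4 * κ ^ 2)
      ≤ ∑' n : ℤ, ‖FC q (2 * π * n)‖ ^ 2 / ((2 * π * n) ^ 2 + 4 * κ ^ 2) := by
    simpa using hs.le_tsum 0 fun n _ => by positivity
  have hA : 0 ≤ 2 * Real.exp (-κ) / (1 - Real.exp (-κ)) ^ 2 := by positivity
  exact le_add_mul_le_of_coeffs hA (one_div_le_Qκ_coeff hκ0) (Qκ_coeffs_add_le hκ)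
    (by positivity) hzero

lemma inv_add_le_inv_one_add_le {u K : ℝ} (hu : 0 ≤ u) (hK : 1 ≤ K) :
    (u + K)⁻¹ ≤ (1 + u)⁻¹ ∧ (1 + u)⁻¹ ≤ K * (u + K)⁻¹ := by
  refine ⟨inv_anti₀ (by positivity) (by linarith), ?_⟩
  rw [← div_eq_mul_inv, le_div_iff₀ (by linarith), inv_mul_le_iff₀ (by positivity)]
  nlinarith

lemma tsum_le_tsum_and_le_mul_tsum {ι : Type*} {f g : ι → ℝ} {c : ℝ} (hf : Summable f)
    (hg : ∀ i, 0 ≤ g i) (hfg : ∀ i, f i ≤ g i) (hgf : ∀ i, g i ≤ c * f i) :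
    ∑' i, f i ≤ ∑' i, g i ∧ ∑' i, g i ≤ c * ∑' i, f i := by
  have hgs : Summable g := .of_nonneg_of_le hg hgf (hf.mul_left c)
  refine ⟨hf.tsum_le_tsum hfg hgs, ?_⟩
  rw [← tsum_mul_left]
  exact hgs.tsum_le_tsum hgf (hf.mul_left c)

lemma tsum_FC_weights_comparison (q : ℝ → ℝ) {κ : ℝ} (hκ : 1 ≤ κ) :
    (∑' n : ℤ, ‖FC q (2 * π * n)‖ ^ 2 / ((2 * π * n) ^ 2 + 4 * κ ^ 2))
        ≤ ∑' n : ℤ, (1 + (2 * π * n) ^ 2)⁻¹ * ‖FC q (2 * π * n)‖ ^ 2 ∧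
      ∑' n : ℤ, (1 + (2 * π * n) ^ 2)⁻¹ * ‖FC q (2 * π * n)‖ ^ 2
        ≤ 4 * κ ^ 2 * ∑' n : ℤ, ‖FC q (2 * π * n)‖ ^ 2 / ((2 * π * n) ^ 2 + 4 * κ ^ 2) := by
  have hK : 1 ≤ 4 * κ ^ 2 := by nlinarith
  have hweights n := inv_add_le_inv_one_add_le (sq_nonneg (2 * π * n : ℝ)) hK
  simp only [div_eq_inv_mul]
  refine tsum_le_tsum_and_le_mul_tsum ?_ (fun n => by positivity)
    (fun n => mul_le_mul_of_nonneg_right (hweights n).1 (by positivity)) fun n => ?_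
  · simpa only [div_eq_inv_mul] using summable_norm_FC_sq_div q (d := 4 * κ ^ 2) (by positivity)
  · rw [← mul_assoc]
    exact mul_le_mul_of_nonneg_right (hweights n).2 (by positivity)

theorem circle_HS_comparison_general (q : ℝ → ℝ) (κ : ℝ) (hκ : 1 ≤ κ) :
    ((1/κ) * (∑' n : ℤ, ‖FC q (2 * Real.pi * n)‖ ^ 2 /
        ((2 * Real.pi * n) ^ 2 + 4 * κ ^ 2)) ≤ Qκ κ q ∧
      Qκ κ q ≤ (5/κ) * ∑' n : ℤ, ‖FC q (2 * Real.pi * n)‖ ^ 2 /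
        ((2 * Real.pi * n) ^ 2 + 4 * κ ^ 2)) ∧
    (1 / (4 * κ ^ 3)) * (∑' n : ℤ, (1 + (2 * Real.pi * n) ^ 2)⁻¹ *
        ‖FC q (2 * Real.pi * n)‖ ^ 2) ≤ Qκ κ q ∧
      Qκ κ q ≤ (5/κ) * ∑' n : ℤ, (1 + (2 * Real.pi * n) ^ 2)⁻¹ *
        ‖FC q (2 * Real.pi * n)‖ ^ 2 := by
  have hκ0 : 0 < κ := zero_lt_one.trans_le hκ
  obtain ⟨hlower, hupper⟩ := Qκ_bounds q hκ
  obtain ⟨hST, hTS⟩ := tsum_FC_weights_comparison q hκ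
  set S := ∑' n : ℤ, ‖FC q (2 * π * n)‖ ^ 2 / ((2 * π * n) ^ 2 + 4 * κ ^ 2)
  set T := ∑' n : ℤ, (1 + (2 * π * n) ^ 2)⁻¹ * ‖FC q (2 * π * n)‖ ^ 2
  refine ⟨⟨hlower, hupper⟩, ?_, ?_⟩
  · calc 1 / (4 * κ ^ 3) * T ≤ 1 / (4 * κ ^ 3) * (4 * κ ^ 2 * S) := by gcongr
      _ = 1 / κ * S := by field_simp
      _ ≤ Qκ κ q := hlower
  · calc Qκ κ q ≤ 5 / κ * S := hupper
      _ ≤ 5 / κ * T := by gcongr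

theorem circle_HS_comparison (q : ℝ → ℝ) (hq : ContDiff ℝ (⊤ : ℕ∞) q)
    (hper : ∀ x, q (x + 1) = q x) (κ : ℝ) (hκ : 1 ≤ κ) :
    ((1/κ) * (∑' n : ℤ, ‖FC q (2 * Real.pi * n)‖ ^ 2 /
        ((2 * Real.pi * n) ^ 2 + 4 * κ ^ 2)) ≤ Qκ κ q ∧
      Qκ κ q ≤ (5/κ) * ∑' n : ℤ, ‖FC q (2 * Real.pi * n)‖ ^ 2 /
        ((2 * Real.pi * n) ^ 2 + 4 * κ ^ 2)) ∧
    (1 / (4 * κ ^ 3)) * (∑' n : ℤ, (1 + (2 * Real.pi * n) ^ 2)⁻¹ *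
        ‖FC q (2 * Real.pi * n)‖ ^ 2) ≤ Qκ κ q ∧
      Qκ κ q ≤ (5/κ) * ∑' n : ℤ, (1 + (2 * Real.pi * n) ^ 2)⁻¹ *
        ‖FC q (2 * Real.pi * n)‖ ^ 2 :=
  circle_HS_comparison_general q κ hκ
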